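/- arXiv:1705.02264 — 5 statements merged into one kernel-verified Lean document; each statement's English description precedes it below -/
import Mathlib

section
/- In an iterable effect quantale, the derived iteration operator x* = min(x↑ ∩ I↑ ∩ Iter(Q)) satisfies x ▷ x* ⊑ x* and x* ▷ x ⊑ x* for all x. -/
structure EffectQuantale (E : Type*) where
  join : E → E → E
  seq : E → E → E
  top : E
  unit : E
  join_comm : ∀ a b, join a b = join b a
  join_assoc : ∀ a b c, join (join a b) c = join a (join b c)
  join_idem : ∀ a, join a a = a
  join_top : ∀ a, join a top = top
  seq_assoc : ∀ a b c, seq (seq a b) c = seq a (seq b c)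
  unit_seq : ∀ a, seq unit a = a
  seq_unit : ∀ a, seq a unit = a
  seq_join : ∀ a b c, seq a (join b c) = join (seq a b) (seq a c)
  join_seq : ∀ a b c, seq (join a b) c = join (seq a c) (seq b c)
  top_seq : ∀ a, seq top a = top
  seq_top : ∀ a, seq a top = top

/-- The induced partial order: `x ⊑ y` iff `x ⊔ y = y`. -/
def EffectQuantale.le {E : Type*} (Q : EffectQuantale E) (x y : E) : Prop :=
  Q.join x y = y

/-- In an iterable effect quantale, iteration absorbs sequencing with the base effect:
x ▷ x* ⊑ x* and x* ▷ x ⊑ x*. -/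
theorem iter_absorb {E : Type*} (Q : EffectQuantale E) (star : E → E)
    (hclosed : ∀ a b : E, Q.seq a a = a → Q.seq b b = b →
        Q.seq (Q.join a b) (Q.join a b) = Q.join a b)
    (hstar : ∀ x : E,
      (Q.le x (star x) ∧ Q.le Q.unit (star x) ∧ Q.seq (star x) (star x) = star x) ∧
      ∀ y : E, Q.le x y → Q.le Q.unit y → Q.seq y y = y → Q.le (star x) y) :
    ∀ x : E, Q.le (Q.seq x (star x)) (star x) ∧ Q.le (Q.seq (star x) x) (star x) := by
  intro x
  obtain ⟨⟨hx, _, hidem⟩, _⟩ := hstar x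
  constructor
  · show Q.join (Q.seq x (star x)) (star x) = star x
    calc Q.join (Q.seq x (star x)) (star x)
        = Q.join (Q.seq x (star x)) (Q.seq (star x) (star x)) := by rw [hidem]
      _ = Q.seq (Q.join x (star x)) (star x) := (Q.join_seq _ _ _).symm
      _ = star x := by rw [hx, hidem]
  · show Q.join (Q.seq (star x) x) (star x) = star x
    calc Q.join (Q.seq (star x) x) (star x)
        = Q.join (Q.seq (star x) x) (Q.seq (star x) (star x)) := by rw [hidem]
      _ = Q.seq (star x) (Q.join x (star x)) := (Q.seq_join _ _ _).symm
      _ = star x := by rw [hx, hidem]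
end

section
/- In an iterable effect quantale where Iter(Q) is closed under joins, the derived iteration distributes over joins: (a ⊔ b)* = a* ⊔ b*. -/
/-- In an iterable effect quantale with Iter(Q) closed under joins, the derived
iteration distributes over joins: (a ⊔ b)* = a* ⊔ b*. -/
theorem iter_join {E : Type*} (Q : EffectQuantale E) (star : E → E)
    (hclosed : ∀ a b : E, Q.seq a a = a → Q.seq b b = b →
        Q.seq (Q.join a b) (Q.join a b) = Q.join a b)
    (hstar : ∀ x : E,
      (Q.le x (star x) ∧ Q.le Q.unit (star x) ∧ Q.seq (star x) (star x) = star x) ∧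
      ∀ y : E, Q.le x y → Q.le Q.unit y → Q.seq y y = y → Q.le (star x) y) :
    ∀ a b : E, star (Q.join a b) = Q.join (star a) (star b) := by

  -- basic order lemmas
  have le_refl : ∀ x, Q.le x x := fun x => Q.join_idem x
  have le_trans : ∀ x y z, Q.le x y → Q.le y z → Q.le x z := by
    intro x y z h1 h2
    unfold EffectQuantale.le at *
    rw [← h2, ← Q.join_assoc, h1]
  have antisymm : ∀ x y, Q.le x y → Q.le y x → x = y := by
    intro x y h1 h2
    unfold EffectQuantale.le at *
    rw [← h1, Q.join_comm, h2]
  have le_join_left : ∀ x y, Q.le x (Q.join x y) := by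
    intro x y
    unfold EffectQuantale.le
    rw [← Q.join_assoc, Q.join_idem]
  have le_join_right : ∀ x y, Q.le y (Q.join x y) := by
    intro x y
    unfold EffectQuantale.le
    rw [Q.join_comm x y, ← Q.join_assoc, Q.join_idem]
  have join_le : ∀ x y z, Q.le x z → Q.le y z → Q.le (Q.join x y) z := by
    intro x y z h1 h2
    unfold EffectQuantale.le at *
    rw [Q.join_assoc, h2, h1]
  intro a b
  obtain ⟨⟨haa, hau, hai⟩, hamin⟩ := hstar a
  obtain ⟨⟨hbb, hbu, hbi⟩, hbmin⟩ := hstar b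
  obtain ⟨⟨hcc, hcu, hci⟩, hcmin⟩ := hstar (Q.join a b)
  apply antisymm
  · -- star (a ⊔ b) ≤ star a ⊔ star b
    apply hcmin
    · exact join_le _ _ _ (le_trans _ _ _ haa (le_join_left _ _))
        (le_trans _ _ _ hbb (le_join_right _ _))
    · exact le_trans _ _ _ hau (le_join_left _ _)
    · exact hclosed _ _ hai hbi
  · -- star a ⊔ star b ≤ star (a ⊔ b)
    apply join_le
    · exact hamin _ (le_trans _ _ _ (le_join_left a b) hcc) hcu hci
    · exact hbmin _ (le_trans _ _ _ (le_join_right a b) hcc) hcu hci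
end

section
/- The product of two effect quantales Q and R — whose carrier is (Q\{⊤_Q} × R\{⊤_R}) ∪ {Err}, with pointwise operations that collapse to Err whenever either component would be top — is again an effect quantale with unit (I_Q, I_R) and top Err. -/
namespace EQProd

variable {E F : Type*} (Q : EffectQuantale E) (R : EffectQuantale F)

open Classical in
noncomputable def lift (f : E → E → E) (g : F → F → F) :
    Option ({a : E // a ≠ Q.top} × {b : F // b ≠ R.top}) →
    Option ({a : E // a ≠ Q.top} × {b : F // b ≠ R.top}) →
    Option ({a : E // a ≠ Q.top} × {b : F // b ≠ R.top})
  | none, _ => none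
  | some _, none => none
  | some a, some b =>
    if h : f a.1.1 b.1.1 = Q.top ∨ g a.2.1 b.2.1 = R.top then none
    else some (⟨f a.1.1 b.1.1, fun h' => h (Or.inl h')⟩,
               ⟨g a.2.1 b.2.1, fun h' => h (Or.inr h')⟩)

variable {Q R}

@[simp] lemma lift_none_left (f g) (x) : lift Q R f g none x = none := rfl
@[simp] lemma lift_none_right (f g) (x) : lift Q R f g x none = none := by
  cases x <;> rfl
lemma lift_some_none (f g) (a b)
    (h : f a.1.1 b.1.1 = Q.top ∨ g a.2.1 b.2.1 = R.top) :
    lift Q R f g (some a) (some b) = none := by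
  simp only [lift, dif_pos h]

lemma lift_some_some (f g) (a b)
    (h : ¬(f a.1.1 b.1.1 = Q.top ∨ g a.2.1 b.2.1 = R.top)) :
    lift Q R f g (some a) (some b) =
      some (⟨f a.1.1 b.1.1, fun h' => h (Or.inl h')⟩,
            ⟨g a.2.1 b.2.1, fun h' => h (Or.inr h')⟩) := by
  simp only [lift, dif_neg h]

lemma lift_comm (f g) (hf : ∀ x y, f x y = f y x) (hg : ∀ x y, g x y = g y x) (x y) :
    lift Q R f g x y = lift Q R f g y x := by
  rcases x with _ | a; · simp
  rcases y with _ | b; · simp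
  by_cases h : f a.1.1 b.1.1 = Q.top ∨ g a.2.1 b.2.1 = R.top
  · rw [lift_some_none _ _ _ _ h, lift_some_none]
    rw [hf b.1.1, hg b.2.1]; exact h
  · rw [lift_some_some _ _ _ _ h, lift_some_some]
    · simp only [Option.some.injEq, Prod.mk.injEq, Subtype.mk.injEq]
      exact ⟨hf _ _, hg _ _⟩
    · rw [hf b.1.1, hg b.2.1]; exact h

lemma lift_assoc (f g)
    (hf : ∀ x y z, f (f x y) z = f x (f y z))
    (hg : ∀ x y z, g (g x y) z = g x (g y z))
    (hfl : ∀ x, f Q.top x = Q.top) (hfr : ∀ x, f x Q.top = Q.top)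
    (hgl : ∀ x, g R.top x = R.top) (hgr : ∀ x, g x R.top = R.top)
    (x y z) :
    lift Q R f g (lift Q R f g x y) z = lift Q R f g x (lift Q R f g y z) := by
  rcases x with _ | a; · simp
  rcases y with _ | b; · simp
  rcases z with _ | c; · simp
  have key : (f (f a.1.1 b.1.1) c.1.1 = Q.top ∨ g (g a.2.1 b.2.1) c.2.1 = R.top) ↔
      (f a.1.1 (f b.1.1 c.1.1) = Q.top ∨ g a.2.1 (g b.2.1 c.2.1) = R.top) := by
    rw [hf, hg]
  by_cases h1 : f a.1.1 b.1.1 = Q.top ∨ g a.2.1 b.2.1 = R.top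
  · rw [lift_some_none _ _ _ _ h1, lift_none_left]
    have h2 : f a.1.1 (f b.1.1 c.1.1) = Q.top ∨ g a.2.1 (g b.2.1 c.2.1) = R.top := by
      rcases h1 with h | h
      · exact Or.inl (by rw [← hf, h, hfl])
      · exact Or.inr (by rw [← hg, h, hgl])
    by_cases h3 : f b.1.1 c.1.1 = Q.top ∨ g b.2.1 c.2.1 = R.top
    · rw [lift_some_none _ _ _ _ h3, lift_none_right]
    · rw [lift_some_some _ _ _ _ h3, lift_some_none _ _ _ _ h2]
  · rw [lift_some_some _ _ _ _ h1]
    by_cases h3 : f b.1.1 c.1.1 = Q.top ∨ g b.2.1 c.2.1 = R.top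
    · rw [lift_some_none _ _ _ _ h3, lift_none_right]
      have h2 : f (f a.1.1 b.1.1) c.1.1 = Q.top ∨ g (g a.2.1 b.2.1) c.2.1 = R.top := by
        rcases h3 with h | h
        · exact Or.inl (by rw [hf, h, hfr])
        · exact Or.inr (by rw [hg, h, hgr])
      exact lift_some_none _ _ _ _ h2
    · rw [lift_some_some _ _ _ _ h3]
      by_cases h2 : f (f a.1.1 b.1.1) c.1.1 = Q.top ∨ g (g a.2.1 b.2.1) c.2.1 = R.top
      · rw [lift_some_none _ _ _ _ h2, lift_some_none _ _ _ _ (key.mp h2)]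
      · rw [lift_some_some _ _ _ _ h2, lift_some_some _ _ _ _ (fun h => h2 (key.mpr h))]
        simp only [Option.some.injEq, Prod.mk.injEq, Subtype.mk.injEq]
        exact ⟨hf _ _ _, hg _ _ _⟩


lemma lift_distrib_left (sq gs j gj)
    (hd : ∀ x y z, sq x (j y z) = j (sq x y) (sq x z))
    (hgd : ∀ x y z, gs x (gj y z) = gj (gs x y) (gs x z))
    (hstr : ∀ x, sq x Q.top = Q.top) (hgstr : ∀ x, gs x R.top = R.top)
    (hjl : ∀ x, j Q.top x = Q.top) (hjr : ∀ x, j x Q.top = Q.top)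
    (hgjl : ∀ x, gj R.top x = R.top) (hgjr : ∀ x, gj x R.top = R.top)
    (x y z) :
    lift Q R sq gs x (lift Q R j gj y z) =
      lift Q R j gj (lift Q R sq gs x y) (lift Q R sq gs x z) := by
  rcases x with _ | a; · simp
  rcases y with _ | b; · simp
  rcases z with _ | c; · simp
  have key : (sq a.1.1 (j b.1.1 c.1.1) = Q.top ∨ gs a.2.1 (gj b.2.1 c.2.1) = R.top) ↔
      (j (sq a.1.1 b.1.1) (sq a.1.1 c.1.1) = Q.top ∨
        gj (gs a.2.1 b.2.1) (gs a.2.1 c.2.1) = R.top) := by rw [hd, hgd]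
  have rhsnone :
      (j (sq a.1.1 b.1.1) (sq a.1.1 c.1.1) = Q.top ∨
        gj (gs a.2.1 b.2.1) (gs a.2.1 c.2.1) = R.top) →
      lift Q R j gj (lift Q R sq gs (some a) (some b)) (lift Q R sq gs (some a) (some c)) =
        none := by
    intro hJ
    by_cases h1 : sq a.1.1 b.1.1 = Q.top ∨ gs a.2.1 b.2.1 = R.top
    · rw [lift_some_none _ _ _ _ h1, lift_none_left]
    · rw [lift_some_some _ _ _ _ h1]
      by_cases h2 : sq a.1.1 c.1.1 = Q.top ∨ gs a.2.1 c.2.1 = R.top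
      · rw [lift_some_none _ _ _ _ h2, lift_none_right]
      · rw [lift_some_some _ _ _ _ h2]; exact lift_some_none _ _ _ _ hJ
  by_cases hj : j b.1.1 c.1.1 = Q.top ∨ gj b.2.1 c.2.1 = R.top
  · rw [lift_some_none _ _ _ _ hj, lift_none_right, rhsnone]
    rcases hj with h | h
    · exact Or.inl (by rw [← hd, h, hstr])
    · exact Or.inr (by rw [← hgd, h, hgstr])
  · rw [lift_some_some _ _ _ _ hj]
    by_cases hS : sq a.1.1 (j b.1.1 c.1.1) = Q.top ∨ gs a.2.1 (gj b.2.1 c.2.1) = R.top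
    · rw [lift_some_none _ _ _ _ hS, rhsnone (key.mp hS)]
    · rw [lift_some_some _ _ _ _ hS]
      have h1 : ¬(sq a.1.1 b.1.1 = Q.top ∨ gs a.2.1 b.2.1 = R.top) := by
        rintro (h | h)
        · exact hS (key.mpr (Or.inl (by rw [h, hjl])))
        · exact hS (key.mpr (Or.inr (by rw [h, hgjl])))
      have h2 : ¬(sq a.1.1 c.1.1 = Q.top ∨ gs a.2.1 c.2.1 = R.top) := by
        rintro (h | h)
        · exact hS (key.mpr (Or.inl (by rw [h, hjr])))
        · exact hS (key.mpr (Or.inr (by rw [h, hgjr])))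
      rw [lift_some_some _ _ _ _ h1, lift_some_some _ _ _ _ h2,
        lift_some_some _ _ _ _ (fun h => hS (key.mpr h))]
      simp only [Option.some.injEq, Prod.mk.injEq, Subtype.mk.injEq]
      exact ⟨hd _ _ _, hgd _ _ _⟩

lemma lift_distrib_right (sq gs j gj)
    (hd : ∀ x y z, sq (j x y) z = j (sq x z) (sq y z))
    (hgd : ∀ x y z, gs (gj x y) z = gj (gs x z) (gs y z))
    (hstl : ∀ x, sq Q.top x = Q.top) (hgstl : ∀ x, gs R.top x = R.top)
    (hjl : ∀ x, j Q.top x = Q.top) (hjr : ∀ x, j x Q.top = Q.top)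
    (hgjl : ∀ x, gj R.top x = R.top) (hgjr : ∀ x, gj x R.top = R.top)
    (x y z) :
    lift Q R sq gs (lift Q R j gj x y) z =
      lift Q R j gj (lift Q R sq gs x z) (lift Q R sq gs y z) := by
  rcases x with _ | a; · simp
  rcases y with _ | b; · simp
  rcases z with _ | c; · simp
  have key : (sq (j a.1.1 b.1.1) c.1.1 = Q.top ∨ gs (gj a.2.1 b.2.1) c.2.1 = R.top) ↔
      (j (sq a.1.1 c.1.1) (sq b.1.1 c.1.1) = Q.top ∨
        gj (gs a.2.1 c.2.1) (gs b.2.1 c.2.1) = R.top) := by rw [hd, hgd]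
  have rhsnone :
      (j (sq a.1.1 c.1.1) (sq b.1.1 c.1.1) = Q.top ∨
        gj (gs a.2.1 c.2.1) (gs b.2.1 c.2.1) = R.top) →
      lift Q R j gj (lift Q R sq gs (some a) (some c)) (lift Q R sq gs (some b) (some c)) =
        none := by
    intro hJ
    by_cases h1 : sq a.1.1 c.1.1 = Q.top ∨ gs a.2.1 c.2.1 = R.top
    · rw [lift_some_none _ _ _ _ h1, lift_none_left]
    · rw [lift_some_some _ _ _ _ h1]
      by_cases h2 : sq b.1.1 c.1.1 = Q.top ∨ gs b.2.1 c.2.1 = R.top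
      · rw [lift_some_none _ _ _ _ h2, lift_none_right]
      · rw [lift_some_some _ _ _ _ h2]; exact lift_some_none _ _ _ _ hJ
  by_cases hj : j a.1.1 b.1.1 = Q.top ∨ gj a.2.1 b.2.1 = R.top
  · rw [lift_some_none _ _ _ _ hj, lift_none_left, rhsnone]
    rcases hj with h | h
    · exact Or.inl (by rw [← hd, h, hstl])
    · exact Or.inr (by rw [← hgd, h, hgstl])
  · rw [lift_some_some _ _ _ _ hj]
    by_cases hS : sq (j a.1.1 b.1.1) c.1.1 = Q.top ∨ gs (gj a.2.1 b.2.1) c.2.1 = R.top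
    · rw [lift_some_none _ _ _ _ hS, rhsnone (key.mp hS)]
    · rw [lift_some_some _ _ _ _ hS]
      have h1 : ¬(sq a.1.1 c.1.1 = Q.top ∨ gs a.2.1 c.2.1 = R.top) := by
        rintro (h | h)
        · exact hS (key.mpr (Or.inl (by rw [h, hjl])))
        · exact hS (key.mpr (Or.inr (by rw [h, hgjl])))
      have h2 : ¬(sq b.1.1 c.1.1 = Q.top ∨ gs b.2.1 c.2.1 = R.top) := by
        rintro (h | h)
        · exact hS (key.mpr (Or.inl (by rw [h, hjr])))
        · exact hS (key.mpr (Or.inr (by rw [h, hgjr])))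
      rw [lift_some_some _ _ _ _ h1, lift_some_some _ _ _ _ h2,
        lift_some_some _ _ _ _ (fun h => hS (key.mpr h))]
      simp only [Option.some.injEq, Prod.mk.injEq, Subtype.mk.injEq]
      exact ⟨hd _ _ _, hgd _ _ _⟩

end EQProd


/-- The product of two effect quantales, with carrier
(Q∖{⊤} × R∖{⊤}) ∪ {Err}, pointwise operations collapsing to Err whenever either
component would be top, is again an effect quantale with unit (I_Q, I_R) and top Err. -/
theorem product_effect_quantale {E F : Type*}
    (Q : EffectQuantale E) (R : EffectQuantale F)
    (hQ : Q.unit ≠ Q.top) (hR : R.unit ≠ R.top) :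
    ∃ P : EffectQuantale (Option ({a : E // a ≠ Q.top} × {b : F // b ≠ R.top})),
      P.top = none ∧
      P.unit = some (⟨Q.unit, hQ⟩, ⟨R.unit, hR⟩) ∧
      (∀ a, P.join a none = none) ∧ (∀ a, P.join none a = none) ∧
      (∀ a b c, P.join (some a) (some b) = some c ↔
        (c.1.1 = Q.join a.1.1 b.1.1 ∧ c.2.1 = R.join a.2.1 b.2.1)) ∧
      (∀ a b, P.join (some a) (some b) = none ↔
        (Q.join a.1.1 b.1.1 = Q.top ∨ R.join a.2.1 b.2.1 = R.top)) ∧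
      (∀ a, P.seq a none = none) ∧ (∀ a, P.seq none a = none) ∧
      (∀ a b c, P.seq (some a) (some b) = some c ↔
        (c.1.1 = Q.seq a.1.1 b.1.1 ∧ c.2.1 = R.seq a.2.1 b.2.1)) ∧
      (∀ a b, P.seq (some a) (some b) = none ↔
        (Q.seq a.1.1 b.1.1 = Q.top ∨ R.seq a.2.1 b.2.1 = R.top)) := by
  have jQl : ∀ x, Q.join Q.top x = Q.top := fun x => (Q.join_comm _ _).trans (Q.join_top x)
  have jRl : ∀ x, R.join R.top x = R.top := fun x => (R.join_comm _ _).trans (R.join_top x)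
  refine ⟨{
    join := EQProd.lift Q R Q.join R.join
    seq := EQProd.lift Q R Q.seq R.seq
    top := none
    unit := some (⟨Q.unit, hQ⟩, ⟨R.unit, hR⟩)
    join_comm := EQProd.lift_comm _ _ Q.join_comm R.join_comm
    join_assoc := EQProd.lift_assoc _ _ Q.join_assoc R.join_assoc jQl Q.join_top jRl R.join_top
    join_idem := ?_
    join_top := fun a => EQProd.lift_none_right _ _ _
    seq_assoc := EQProd.lift_assoc _ _ Q.seq_assoc R.seq_assoc Q.top_seq Q.seq_top R.top_seq
      R.seq_top
    unit_seq := ?_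
    seq_unit := ?_
    seq_join := EQProd.lift_distrib_left _ _ _ _ Q.seq_join R.seq_join Q.seq_top R.seq_top jQl
      Q.join_top jRl R.join_top
    join_seq := EQProd.lift_distrib_right _ _ _ _ Q.join_seq R.join_seq Q.top_seq R.top_seq jQl
      Q.join_top jRl R.join_top
    top_seq := fun a => rfl
    seq_top := fun a => EQProd.lift_none_right _ _ _ },
    rfl, rfl, fun a => EQProd.lift_none_right _ _ _, fun a => rfl, ?_, ?_,
    fun a => EQProd.lift_none_right _ _ _, fun a => rfl, ?_, ?_⟩
  · -- join_idem
    rintro (_ | ⟨⟨a1, h1⟩, ⟨a2, h2⟩⟩)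
    · rfl
    · have h : ¬(Q.join a1 a1 = Q.top ∨ R.join a2 a2 = R.top) := by
        simp [Q.join_idem, R.join_idem, h1, h2]
      rw [EQProd.lift_some_some _ _ _ _ h]
      simp [Q.join_idem, R.join_idem]
  · -- unit_seq
    rintro (_ | ⟨⟨a1, h1⟩, ⟨a2, h2⟩⟩)
    · rfl
    · have h : ¬(Q.seq Q.unit a1 = Q.top ∨ R.seq R.unit a2 = R.top) := by
        simp [Q.unit_seq, R.unit_seq, h1, h2]
      rw [EQProd.lift_some_some _ _ _ _ h]
      simp [Q.unit_seq, R.unit_seq]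
  · -- seq_unit
    rintro (_ | ⟨⟨a1, h1⟩, ⟨a2, h2⟩⟩)
    · rfl
    · have h : ¬(Q.seq a1 Q.unit = Q.top ∨ R.seq a2 R.unit = R.top) := by
        simp [Q.seq_unit, R.seq_unit, h1, h2]
      rw [EQProd.lift_some_some _ _ _ _ h]
      simp [Q.seq_unit, R.seq_unit]
  · -- join some some = some c
    rintro ⟨⟨a1, ha1⟩, ⟨a2, ha2⟩⟩ ⟨⟨b1, hb1⟩, ⟨b2, hb2⟩⟩ ⟨⟨c1, hc1⟩, ⟨c2, hc2⟩⟩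
    dsimp only
    constructor
    · intro h
      by_cases hcol : Q.join a1 b1 = Q.top ∨ R.join a2 b2 = R.top
      · rw [EQProd.lift_some_none _ _ _ _ hcol] at h; exact absurd h (by simp)
      · rw [EQProd.lift_some_some _ _ _ _ hcol] at h
        simp only [Option.some.injEq, Prod.mk.injEq, Subtype.mk.injEq] at h
        exact ⟨h.1.symm, h.2.symm⟩
    · rintro ⟨h1, h2⟩
      have hcol : ¬(Q.join a1 b1 = Q.top ∨ R.join a2 b2 = R.top) := by
        rintro (h | h)
        · exact hc1 (h1.trans h)
        · exact hc2 (h2.trans h)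
      rw [EQProd.lift_some_some _ _ _ _ hcol]
      simp only [Option.some.injEq, Prod.mk.injEq, Subtype.mk.injEq]
      exact ⟨h1.symm, h2.symm⟩
  · -- join some some = none
    rintro ⟨⟨a1, ha1⟩, ⟨a2, ha2⟩⟩ ⟨⟨b1, hb1⟩, ⟨b2, hb2⟩⟩
    dsimp only
    constructor
    · intro h
      by_cases hcol : Q.join a1 b1 = Q.top ∨ R.join a2 b2 = R.top
      · exact hcol
      · rw [EQProd.lift_some_some _ _ _ _ hcol] at h; exact absurd h (by simp)
    · intro h; exact EQProd.lift_some_none _ _ _ _ h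
  · -- seq some some = some c
    rintro ⟨⟨a1, ha1⟩, ⟨a2, ha2⟩⟩ ⟨⟨b1, hb1⟩, ⟨b2, hb2⟩⟩ ⟨⟨c1, hc1⟩, ⟨c2, hc2⟩⟩
    dsimp only
    constructor
    · intro h
      by_cases hcol : Q.seq a1 b1 = Q.top ∨ R.seq a2 b2 = R.top
      · rw [EQProd.lift_some_none _ _ _ _ hcol] at h; exact absurd h (by simp)
      · rw [EQProd.lift_some_some _ _ _ _ hcol] at h
        simp only [Option.some.injEq, Prod.mk.injEq, Subtype.mk.injEq] at h
        exact ⟨h.1.symm, h.2.symm⟩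
    · rintro ⟨h1, h2⟩
      have hcol : ¬(Q.seq a1 b1 = Q.top ∨ R.seq a2 b2 = R.top) := by
        rintro (h | h)
        · exact hc1 (h1.trans h)
        · exact hc2 (h2.trans h)
      rw [EQProd.lift_some_some _ _ _ _ hcol]
      simp only [Option.some.injEq, Prod.mk.injEq, Subtype.mk.injEq]
      exact ⟨h1.symm, h2.symm⟩
  · -- seq some some = none
    rintro ⟨⟨a1, ha1⟩, ⟨a2, ha2⟩⟩ ⟨⟨b1, hb1⟩, ⟨b2, hb2⟩⟩
    dsimp only
    constructor
    · intro h
      by_cases hcol : Q.seq a1 b1 = Q.top ∨ R.seq a2 b2 = R.top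
      · exact hcol
      · rw [EQProd.lift_some_some _ _ _ _ hcol] at h; exact absurd h (by simp)
    · intro h; exact EQProd.lift_some_none _ _ _ _ h
end

section
/- Every nontrivial effect quantale Q induces an effectoid on E \ {⊤} by defining Base(a) iff I ⊑ a and a ≠ ⊤; a ≤ b iff a ⊑ b and b ≠ ⊤; and a ⨟ b ↦ c iff a ▷ b ⊑ c and c ≠ ⊤. That is, these relations satisfy the effectoid identity, associativity, and reflexive-congruence laws. -/
namespace EffectQuantale
variable {E : Type*} (Q : EffectQuantale E)

theorem le_refl (a : E) : Q.le a a := Q.join_idem a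

theorem le_trans {a b c : E} (h1 : Q.le a b) (h2 : Q.le b c) : Q.le a c := by
  unfold le at *
  rw [← h2, ← Q.join_assoc, h1]

theorem seq_mono_left {a b : E} (c : E) (h : Q.le a b) : Q.le (Q.seq a c) (Q.seq b c) := by
  unfold le at *
  rw [← Q.join_seq, h]

theorem seq_mono_right {a b : E} (c : E) (h : Q.le a b) : Q.le (Q.seq c a) (Q.seq c b) := by
  unfold le at *
  rw [← Q.seq_join, h]

theorem top_le {a : E} (h : Q.le Q.top a) : a = Q.top := by
  unfold le at h
  rw [Q.join_comm, Q.join_top] at h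
  exact h.symm

theorem unit_ne_top (hnt : ∃ a : E, a ≠ Q.top) : Q.unit ≠ Q.top := by
  obtain ⟨a, ha⟩ := hnt
  intro h
  exact ha (by rw [← Q.unit_seq a, h, Q.top_seq])

end EffectQuantale

/-- Every nontrivial effect quantale induces an effectoid on E ∖ {⊤}:
Base a iff I ⊑ a; a ≤ b iff a ⊑ b; a ⨟ b ↦ c iff a ▷ b ⊑ c.  These relations
satisfy the effectoid identity, associativity, and reflexive-congruence laws. -/
theorem quantale_to_effectoid {E : Type*} (Q : EffectQuantale E)
    (hnt : ∃ a : E, a ≠ Q.top) :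
    let Eff := {a : E // a ≠ Q.top}
    let Base : Eff → Prop := fun a => Q.le Q.unit a.1
    let le : Eff → Eff → Prop := fun a b => Q.le a.1 b.1
    let seqr : Eff → Eff → Eff → Prop := fun a b c => Q.le (Q.seq a.1 b.1) c.1
    -- Identity
    (∀ ε ε' : Eff,
      ((∃ εl, Base εl ∧ seqr εl ε ε') ↔ le ε ε') ∧
      (le ε ε' ↔ (∃ εr, Base εr ∧ seqr ε εr ε'))) ∧
    -- Associativity
    (∀ ε₁ ε₂ ε₃ ε : Eff,
      (∃ e, seqr ε₁ ε₂ e ∧ seqr e ε₃ ε) ↔ (∃ e, seqr ε₂ ε₃ e ∧ seqr ε₁ e ε)) ∧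
    -- Reflexive congruence
    (∀ ε : Eff, le ε ε) ∧
    (∀ ε ε' : Eff, Base ε → le ε ε' → Base ε') ∧
    (∀ ε₁ ε₂ ε ε' : Eff, seqr ε₁ ε₂ ε → le ε ε' → seqr ε₁ ε₂ ε') := by
  intro Eff Base le seqr
  have hu := Q.unit_ne_top hnt
  refine ⟨?_, ?_, fun ε => Q.le_refl _, fun ε ε' h1 h2 => Q.le_trans h1 h2,
    fun ε₁ ε₂ ε ε' h1 h2 => Q.le_trans h1 h2⟩
  · intro ε ε'
    constructor
    · constructor
      · rintro ⟨εl, hb, hs⟩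
        have : Q.le ε.1 (Q.seq εl.1 ε.1) := by
          have := Q.seq_mono_left ε.1 hb
          rwa [Q.unit_seq] at this
        exact Q.le_trans this hs
      · intro h
        exact ⟨⟨Q.unit, hu⟩, Q.le_refl _, by simpa [seqr, Q.unit_seq] using h⟩
    · constructor
      · intro h
        exact ⟨⟨Q.unit, hu⟩, Q.le_refl _, by simpa [seqr, Q.seq_unit] using h⟩
      · rintro ⟨εr, hb, hs⟩
        have : Q.le ε.1 (Q.seq ε.1 εr.1) := by
          have := Q.seq_mono_right ε.1 hb
          rwa [Q.seq_unit] at this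
        exact Q.le_trans this hs
  · intro ε₁ ε₂ ε₃ ε
    constructor
    · rintro ⟨e, h1, h2⟩
      have hle : Q.le (Q.seq ε₁.1 (Q.seq ε₂.1 ε₃.1)) ε.1 := by
        rw [← Q.seq_assoc]
        exact Q.le_trans (Q.seq_mono_left ε₃.1 h1) h2
      have hne : Q.seq ε₂.1 ε₃.1 ≠ Q.top := by
        intro h
        apply ε.2
        apply Q.top_le
        rwa [h, Q.seq_top] at hle
      exact ⟨⟨Q.seq ε₂.1 ε₃.1, hne⟩, Q.le_refl _, hle⟩
    · rintro ⟨e, h1, h2⟩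
      have hle : Q.le (Q.seq (Q.seq ε₁.1 ε₂.1) ε₃.1) ε.1 := by
        rw [Q.seq_assoc]
        exact Q.le_trans (Q.seq_mono_right ε₁.1 h1) h2
      have hne : Q.seq ε₁.1 ε₂.1 ≠ Q.top := by
        intro h
        apply ε.2
        apply Q.top_le
        rwa [h, Q.top_seq] at hle
      exact ⟨⟨Q.seq ε₁.1 ε₂.1, hne⟩, Q.le_refl _, hle⟩
end

section
/- In the lockset effect quantale L over a set of locks (multiset pairs with Err), the freely iterable elements are exactly Err together with the pairs (a, a) of equal multisets; and the derived iteration operator sends each (a,a) to itself and every pair (a,b) with a ≠ b to Err. -/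
section Lockset

variable {X : Type*} [DecidableEq X]

/-- Elements of the lockset effect quantale: pairs of multisets of locks
(claims held before / after), plus an error element (none). -/
abbrev LockEff (X : Type*) := Option (Multiset X × Multiset X)

/-- Join in the lockset quantale: defined when both sides acquire and release
the same locks the same number of times, Err otherwise. -/
def ljoin : LockEff X → LockEff X → LockEff X
  | some (a, a'), some (b, b') =>
      if b - b' = a - a' ∧ b' - b = a' - a then some (a ∪ b, a' ∪ b') else none
  | _, _ => none

/-- Sequencing in the lockset quantale: the least pair (c, c') with a ⊆ c,
b ⊆ (c ∖ (a∖a')) ∪ (a'∖a), and c' the result of both actions. -/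
def lseq : LockEff X → LockEff X → LockEff X
  | some (a, a'), some (b, b') =>
      let c := a ∪ ((b - (a' - a)) + (a - a'))
      let mid := (c - (a - a')) + (a' - a)
      some (c, (mid - (b - b')) + (b' - b))
  | _, _ => none

/-- The induced order on lockset effects. -/
def lle (x y : LockEff X) : Prop := ljoin x y = y

/-!
Squaring `(a, b)` applies its net lock change twice, so (comparing the count of each lock) it
returns `(a, b)` only when `a = b`. The join of two effects is not `Err` only when they have
the same net acquisitions `a - b` and releases `b - a`, so no iterable pair `(c, c)` lies above
`(a, b)` with `a ≠ b`, and the derived iteration is `Err` there. Conversely `(a, a)` is itself iterable and lies above the unit, so it is its own iteration.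
-/

theorem ljoin_comm (x y : LockEff X) : ljoin x y = ljoin y x := by
  rcases x with _ | ⟨a, a'⟩ <;> rcases y with _ | ⟨b, b'⟩
  · rfl
  · rfl
  · rfl
  · simp only [ljoin, eq_comm (a := b - b'), eq_comm (a := b' - b), Multiset.union_comm]

theorem lle_refl (x : LockEff X) : lle x x := by
  rcases x with _ | ⟨a, a'⟩ <;> simp [lle, ljoin, ← Multiset.sup_eq_union]

theorem lle_antisymm {x y : LockEff X} (hxy : lle x y) (hyx : lle y x) : x = y :=
  hyx.symm.trans ((ljoin_comm y x).trans hxy)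

theorem lle_zero_some_self (a : Multiset X) : lle (some (0, 0)) (some (a, a)) := by
  simp [lle, ljoin]

theorem eq_of_lle_some_self {a b c : Multiset X} (h : lle (some (a, b)) (some (c, c))) : a = b := by
  simp only [lle, ljoin, tsub_self] at h
  split_ifs at h with hab
  exact le_antisymm (tsub_eq_zero_iff_le.mp hab.1.symm) (tsub_eq_zero_iff_le.mp hab.2.symm)

theorem lseq_some_self_eq_iff (a b : Multiset X) :
    lseq (some (a, b)) (some (a, b)) = some (a, b) ↔ a = b := by
  simp only [lseq, Option.some.injEq, Prod.mk.injEq]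
  constructor
  · rintro ⟨hc, hc'⟩
    ext z
    have hz := congrArg (Multiset.count z) hc
    have hz' := congrArg (Multiset.count z) hc'
    simp only [Multiset.count_union, Multiset.count_sub, Multiset.count_add] at hz hz'
    omega
  · rintro rfl
    simp [← Multiset.sup_eq_union]

theorem lseq_self_eq_iff (x : LockEff X) :
    lseq x x = x ↔ x = none ∨ ∃ a : Multiset X, x = some (a, a) := by
  rcases x with _ | ⟨a, b⟩
  · simp [lseq]
  · rw [lseq_some_self_eq_iff]
    simp [eq_comm]

/-- In the lockset effect quantale, the freely iterable elements are exactly Err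
and the pairs (a, a); the derived iteration sends each (a, a) to itself and every
(a, b) with a ≠ b to Err. -/
theorem lockset_iteration :
    (∀ x : LockEff X, lseq x x = x ↔ (x = none ∨ ∃ a : Multiset X, x = some (a, a))) ∧
    (∀ star : LockEff X → LockEff X,
      (∀ x : LockEff X,
        (lle x (star x) ∧ lle (some (0, 0)) (star x) ∧ lseq (star x) (star x) = star x) ∧
        ∀ y : LockEff X, lle x y → lle (some (0, 0)) y → lseq y y = y → lle (star x) y) →
      (∀ a : Multiset X, star (some (a, a)) = some (a, a)) ∧
      (∀ a b : Multiset X, a ≠ b → star (some (a, b)) = none)) := by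
  refine ⟨lseq_self_eq_iff, fun star hstar => ⟨fun a => ?_, fun a b hab => ?_⟩⟩
  · obtain ⟨⟨hle, -, -⟩, hmin⟩ := hstar (some (a, a))
    exact (lle_antisymm hle (hmin _ (lle_refl _) (lle_zero_some_self a)
      ((lseq_some_self_eq_iff a a).mpr rfl))).symm
  · obtain ⟨⟨hle, -, hiter⟩, -⟩ := hstar (some (a, b))
    rcases (lseq_self_eq_iff _).mp hiter with hnone | ⟨c, hc⟩
    · exact hnone
    · exact absurd (eq_of_lle_some_self (hc ▸ hle)) hab

end Lockset
end
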